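/- Assume ⊑ is a preorder on closed terms satisfying RDP (⟨V_S|S⟩ ≡ S[⟨V_S|S⟩] where ≡ is the kernel of ⊑) and RSP for guarded specifications (if P⃗ ⊑ S[P⃗] and S[Q⃗] ⊑ Q⃗ then P⃗ ⊑ Q⃗), and that ⊑ is a lean precongruence. Then RSP is equivalent to the pair of rules: from P⃗ ⊑ S[P⃗] infer P⃗ ⊑ ⟨V_S|S⟩, and from S[Q⃗] ⊑ Q⃗ infer ⟨V_S|S⟩ ⊑ Q⃗. -/
import Mathlib


open Classical

/-- A signature: a set of operator symbols with arities. -/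
structure Sg where
  Op : Type
  ar : Op → ℕ

/-- Terms with recursion over a signature `G`, with variables from `V`.
`recc W S X` is the recursive call ⟨X|S⟩ for the recursive specification `S` with
domain (bound variables) `W`. -/
inductive Tm (G : Sg) (V : Type) : Type where
  | var : V → Tm G V
  | op : (f : G.Op) → (Fin (G.ar f) → Tm G V) → Tm G V
  | recc : Set V → (V → Tm G V) → V → Tm G V

namespace Tm
variable {G : Sg} {V : Type}

/-- free variables of a term -/
def fv : Tm G V → Set V
  | .var x => {x}
  | .op _ ts => ⋃ i, fv (ts i)
  | .recc W S _ => (⋃ Y ∈ W, fv (S Y)) \ W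

def Closed (t : Tm G V) : Prop := fv t = ∅

/-- (capture-naive) substitution of a partial map of terms for variables -/
noncomputable def subst (σ : V → Option (Tm G V)) : Tm G V → Tm G V
  | .var x => (σ x).getD (.var x)
  | .op f ts => .op f fun i => (ts i).subst σ
  | .recc W S X => .recc W (fun Y => (S Y).subst fun z => if z ∈ W then none else σ z) X

/-- substitute the components of a `W`-tuple `P` for the variables in `W` -/
noncomputable def tsub (W : Set V) (P : V → Tm G V) (t : Tm G V) : Tm G V :=
  t.subst fun x => if x ∈ W then some (P x) else none

/-- ⟨S_X|S⟩ : the body `S X` with ⟨Y|S⟩ substituted for each `Y ∈ W` -/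
noncomputable def unfold (W : Set V) (S : V → Tm G V) (X : V) : Tm G V :=
  tsub W (fun Y => .recc W S Y) (S X)

/-- a term containing no recursive calls -/
def RecFree : Tm G V → Prop
  | .var _ => True
  | .op _ ts => ∀ i, RecFree (ts i)
  | .recc _ _ _ => False

end Tm

/-- Positive and negative literals. -/
inductive Lit (G : Sg) (V A : Type) where
  | pos : Tm G V → A → Tm G V → Lit G V A
  | neg : Tm G V → A → Lit G V A

namespace Lit
variable {G : Sg} {V A : Type}

def IsPos : Lit G V A → Prop
  | .pos _ _ _ => True
  | .neg _ _ => False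

def IsNeg : Lit G V A → Prop
  | .pos _ _ _ => False
  | .neg _ _ => True

/-- `pos t a t'` and `neg t a` deny each other -/
def Denies : Lit G V A → Lit G V A → Prop
  | .pos t a _, .neg u b => t = u ∧ a = b
  | .neg t a, .pos u b _ => t = u ∧ a = b
  | _, _ => False

def lhs : Lit G V A → Tm G V
  | .pos t _ _ => t
  | .neg t _ => t

def Closed : Lit G V A → Prop
  | .pos t _ t' => t.Closed ∧ t'.Closed
  | .neg t _ => t.Closed

noncomputable def subst (σ : V → Option (Tm G V)) : Lit G V A → Lit G V A
  | .pos t a t' => .pos (t.subst σ) a (t'.subst σ)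
  | .neg t a => .neg (t.subst σ) a

def RecFree : Lit G V A → Prop
  | .pos t _ t' => t.RecFree ∧ t'.RecFree
  | .neg t _ => t.RecFree

end Lit

/-- A transition rule H/α with premises `prem` and conclusion `pos src lab tgt`. -/
structure Rule (G : Sg) (V A : Type) where
  prem : Set (Lit G V A)
  src : Tm G V
  lab : A
  tgt : Tm G V

/-- A transition system specification. -/
structure TSS (G : Sg) (V A : Type) where
  rules : Set (Rule G V A)

variable {G : Sg} {V A : Type}

/-- provability of the rule `H/α` from a TSS (well-founded proof trees) -/
inductive Provable (TS : TSS G V A) (H : Set (Lit G V A)) : Lit G V A → Prop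
  | hyp {l : Lit G V A} : l ∈ H → Provable TS H l
  | rule {r : Rule G V A} (σ : V → Option (Tm G V)) :
      r ∈ TS.rules →
      (∀ l ∈ r.prem, Provable TS H (l.subst σ)) →
      Provable TS H (Lit.pos (r.src.subst σ) r.lab (r.tgt.subst σ))

/-- The approximation CT⁺_λ of the well-founded semantics. -/
noncomputable def CTp (TS : TSS G V A) (lam : Ordinal) : Set (Lit G V A) :=
  let PTm : Set (Lit G V A) :=
    {l | l.IsNeg ∧ l.Closed ∧ ∀ κ, κ < lam → ∀ β ∈ CTp TS κ, ¬ β.Denies l}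
  let PTp : Set (Lit G V A) := {β | β.IsPos ∧ β.Closed ∧ Provable TS PTm β}
  let CTm : Set (Lit G V A) := {l | l.IsNeg ∧ l.Closed ∧ ∀ β ∈ PTp, ¬ β.Denies l}
  {β | β.IsPos ∧ β.Closed ∧ Provable TS CTm β}
termination_by lam

/-- The approximation PT⁻_λ. -/
noncomputable def PTm (TS : TSS G V A) (lam : Ordinal) : Set (Lit G V A) :=
  {l | l.IsNeg ∧ l.Closed ∧ ∀ κ, κ < lam → ∀ β ∈ CTp TS κ, ¬ β.Denies l}

/-- The approximation PT⁺_λ. -/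
noncomputable def PTp (TS : TSS G V A) (lam : Ordinal) : Set (Lit G V A) :=
  {β | β.IsPos ∧ β.Closed ∧ Provable TS (PTm TS lam) β}

/-- The approximation CT⁻_λ. -/
noncomputable def CTm (TS : TSS G V A) (lam : Ordinal) : Set (Lit G V A) :=
  {l | l.IsNeg ∧ l.Closed ∧ ∀ β ∈ PTp TS lam, ¬ β.Denies l}

noncomputable def PTmL (TS : TSS G V A) : Set (Lit G V A) := ⋂ lam : Ordinal.{0}, PTm TS lam
noncomputable def PTpL (TS : TSS G V A) : Set (Lit G V A) := ⋂ lam : Ordinal.{0}, PTp TS lam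
noncomputable def CTmL (TS : TSS G V A) : Set (Lit G V A) := ⋃ lam : Ordinal.{0}, CTm TS lam
noncomputable def CTpL (TS : TSS G V A) : Set (Lit G V A) := ⋃ lam : Ordinal.{0}, CTp TS lam

/-- certain transitions (in CT⁺) of the well-founded semantics -/
noncomputable def Cstep (TS : TSS G V A) (P : Tm G V) (a : A) (Q : Tm G V) : Prop :=
  Lit.pos P a Q ∈ CTpL TS

/-- possible transitions (in PT⁺) of the well-founded semantics -/
noncomputable def Pstep (TS : TSS G V A) (P : Tm G V) (a : A) (Q : Tm G V) : Prop :=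
  Lit.pos P a Q ∈ PTpL TS

/-- bisimulations on the 3-valued transition system of a TSS -/
def IsBisim (TS : TSS G V A) (B : Tm G V → Tm G V → Prop) : Prop :=
  ∀ P Q, B P Q →
    (∀ a P', Cstep TS P a P' → ∃ Q', Cstep TS Q a Q' ∧ B P' Q') ∧
    (∀ a Q', Pstep TS Q a Q' → ∃ P', Pstep TS P a P' ∧ B P' Q')

/-- the bisimulation preorder (modal refinement) on closed terms -/
def refB (TS : TSS G V A) (P Q : Tm G V) : Prop := ∃ B, IsBisim TS B ∧ B P Q

/-- the bisimulation preorder extended to open terms via closed substitutions -/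
noncomputable def refBO (TS : TSS G V A) (E F : Tm G V) : Prop :=
  ∀ ρ : V → Tm G V, (∀ x, (ρ x).Closed) →
    refB TS (E.subst fun x => some (ρ x)) (F.subst fun x => some (ρ x))

/-- ntyft/ntyxt rules without lookahead -/
def NtyftNoLookahead (r : Rule G V A) : Prop :=
  ((∃ x : V, r.src = .var x) ∨
    ∃ (f : G.Op) (xs : Fin (G.ar f) → V), Function.Injective xs ∧
      r.src = .op f fun i => .var (xs i)) ∧
  (∀ l ∈ r.prem, ∀ t (a : A) t', l = .pos t a t' → ∃ y : V, t' = .var y ∧ y ∉ r.src.fv) ∧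
  (∀ l₁ ∈ r.prem, ∀ l₂ ∈ r.prem, ∀ t₁ (a₁ : A) t₂ (a₂ : A) (y : V),
      l₁ = .pos t₁ a₁ (.var y) → l₂ = .pos t₂ a₂ (.var y) → l₁ = l₂) ∧
  (∀ l₁ ∈ r.prem, ∀ t (a : A) (y : V), l₁ = .pos t a (.var y) →
      ∀ l₂ ∈ r.prem, y ∉ l₂.lhs.fv)

def Rule.RecFree (r : Rule G V A) : Prop :=
  r.src.RecFree ∧ r.tgt.RecFree ∧ ∀ l ∈ r.prem, l.RecFree

/-- the rules for recursion: ⟨S_X|S⟩ →a z / ⟨X|S⟩ →a z -/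
def IsRecRule (r : Rule G V A) : Prop :=
  ∃ (W : Set V) (S : V → Tm G V) (X z : V), X ∈ W ∧
    r.prem = {Lit.pos (Tm.unfold W S X) r.lab (.var z)} ∧
    r.src = .recc W S X ∧ r.tgt = .var z

/-- the ready simulation format with recursion -/
def RSFormat (TS : TSS G V A) : Prop :=
  (∀ (W : Set V) (S : V → Tm G V) (X : V), X ∈ W → ∀ a : A, ∃ z : V,
      (⟨{Lit.pos (Tm.unfold W S X) a (.var z)}, .recc W S X, a, .var z⟩ : Rule G V A)
        ∈ TS.rules) ∧
  ∀ r ∈ TS.rules, IsRecRule r ∨ (NtyftNoLookahead r ∧ r.RecFree)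

/-- all (free) occurrences of `x` in the term are Γ̄-frozen -/
def AllFrozen (Γ : (f : G.Op) → Fin (G.ar f) → Prop) (x : V) : Tm G V → Prop
  | .var y => y ≠ x
  | .op f ts => ∀ i, Γ f i ∨ AllFrozen Γ x (ts i)
  | .recc W S _ => x ∈ W ∨ ∀ Y ∈ W, AllFrozen Γ x (S Y)

/-- Γ respects guardedness for the TSS -/
def Respects (TS : TSS G V A) (Γ : (f : G.Op) → Fin (G.ar f) → Prop) : Prop :=
  ∀ r ∈ TS.rules, ∀ (f : G.Op) (xs : Fin (G.ar f) → V),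
    r.src = .op f (fun i => .var (xs i)) →
    ∀ i, Γ f i → ∀ l ∈ r.prem, AllFrozen Γ (xs i) l.lhs

/-- all occurrences of `x` in `E` are TS-guarded -/
def GuardedVar (TS : TSS G V A) (x : V) (E : Tm G V) : Prop :=
  ∃ Γ, Respects TS Γ ∧ AllFrozen Γ x E

/-- a TS-guarded term: all free occurrences of variables are TS-guarded -/
def GuardedTm (TS : TSS G V A) (E : Tm G V) : Prop :=
  ∀ x ∈ E.fv, GuardedVar TS x E

/-- a manifestly guarded recursive specification -/
def ManifestlyGuarded (TS : TSS G V A) (W : Set V) (S : V → Tm G V) : Prop :=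
  ∀ X ∈ W, ∀ Y ∈ W, GuardedVar TS Y (S X)

/-- one step of substituting bodies `S_Y` for recursion variables `Y` in the bodies -/
def SpecStep (W : Set V) (S S' : V → Tm G V) : Prop :=
  ∃ U ⊆ W, ∀ Z, S' Z = (S Z).subst fun Y => if Y ∈ U then some (S Y) else none

/-- a guarded recursive specification: convertible into a manifestly guarded one -/
def SpecGuarded (TS : TSS G V A) (W : Set V) (S : V → Tm G V) : Prop :=
  ∃ S', Relation.ReflTransGen (SpecStep W) S S' ∧ ManifestlyGuarded TS W S'

/-- GSOS rules -/
def IsGSOSRule (r : Rule G V A) : Prop :=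
  ∃ (f : G.Op) (xs : Fin (G.ar f) → V), Function.Injective xs ∧
    r.src = .op f (fun i => .var (xs i)) ∧
    (∀ l ∈ r.prem,
      (∃ (i : Fin (G.ar f)) (a : A) (y : V),
          l = .pos (.var (xs i)) a (.var y) ∧ y ∉ Set.range xs) ∨
      ∃ (i : Fin (G.ar f)) (a : A), l = .neg (.var (xs i)) a) ∧
    (∀ l₁ ∈ r.prem, ∀ l₂ ∈ r.prem, ∀ t₁ (a₁ : A) t₂ (a₂ : A) (y : V),
        l₁ = .pos t₁ a₁ (.var y) → l₂ = .pos t₂ a₂ (.var y) → l₁ = l₂) ∧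
    r.tgt.RecFree ∧
    r.tgt.fv ⊆ Set.range xs ∪ {y | ∃ l ∈ r.prem, ∃ (t : Tm G V) (a : A), l = Lit.pos t a (.var y)}

/-- the GSOS format (with the recursion rules) -/
def GSOSFormat (TS : TSS G V A) : Prop :=
  (∀ (W : Set V) (S : V → Tm G V) (X : V), X ∈ W → ∀ a : A, ∃ z : V,
      (⟨{Lit.pos (Tm.unfold W S X) a (.var z)}, .recc W S X, a, .var z⟩ : Rule G V A)
        ∈ TS.rules) ∧
  ∀ r ∈ TS.rules, IsRecRule r ∨ IsGSOSRule r

/-- all recursive calls occurring in the term use TS-guarded specifications -/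
def AllRecGuarded (TS : TSS G V A) : Tm G V → Prop
  | .var _ => True
  | .op _ ts => ∀ i, AllRecGuarded TS (ts i)
  | .recc W S _ => SpecGuarded TS W S ∧ ∀ Y ∈ W, AllRecGuarded TS (S Y)

/-- argument `i` of operator `f` is unguarded -/
def UnguardedArg (TS : TSS G V A) (f : G.Op) (i : Fin (G.ar f)) : Prop :=
  ¬ ∃ Γ, Respects TS Γ ∧ Γ f i

/-- the relation ⇝ descending to unguarded arguments and unfolding recursion -/
inductive Squig (TS : TSS G V A) : Tm G V → Tm G V → Prop
  | arg {f : G.Op} {ts : Fin (G.ar f) → Tm G V} {i : Fin (G.ar f)} :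
      UnguardedArg TS f i → Squig TS (.op f ts) (ts i)
  | unf {W : Set V} {S : V → Tm G V} {X : V} :
      Squig TS (.recc W S X) (Tm.unfold W S X)

/-- given RDP and lean precongruence, RSP is equivalent to the pair
of rules P⃗ ⊑ S[P⃗] / P⃗ ⊑ ⟨V_S|S⟩ and S[Q⃗] ⊑ Q⃗ / ⟨V_S|S⟩ ⊑ Q⃗. -/
theorem RSP_iff_rules {G : Sg} {V A : Type} (TS : TSS G V A)
    (sq : Tm G V → Tm G V → Prop)
    (hrefl : ∀ t, sq t t)
    (htrans : ∀ t u v, sq t u → sq u v → sq t v)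
    (hRDP : ∀ (W : Set V) (S : V → Tm G V), ∀ X ∈ W,
      sq (.recc W S X) (Tm.unfold W S X) ∧ sq (Tm.unfold W S X) (.recc W S X))
    (hlean : ∀ (W : Set V) (P Q : V → Tm G V) (E : Tm G V),
      (∀ x ∈ W, sq (P x) (Q x)) → sq (Tm.tsub W P E) (Tm.tsub W Q E)) :
    (∀ (W : Set V) (S : V → Tm G V), SpecGuarded TS W S →
      ∀ P Q : V → Tm G V,
        (∀ X ∈ W, sq (P X) (Tm.tsub W P (S X))) →
        (∀ X ∈ W, sq (Tm.tsub W Q (S X)) (Q X)) →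
        ∀ X ∈ W, sq (P X) (Q X))
    ↔ ((∀ (W : Set V) (S : V → Tm G V), SpecGuarded TS W S →
          ∀ P : V → Tm G V, (∀ X ∈ W, sq (P X) (Tm.tsub W P (S X))) →
            ∀ X ∈ W, sq (P X) (.recc W S X)) ∧
       (∀ (W : Set V) (S : V → Tm G V), SpecGuarded TS W S →
          ∀ Q : V → Tm G V, (∀ X ∈ W, sq (Tm.tsub W Q (S X)) (Q X)) →
            ∀ X ∈ W, sq (.recc W S X) (Q X))) := by
  constructor
  · intro RSP
    constructor
    · intro W S hg P hP X hX
      exact RSP W S hg P (fun Y => .recc W S Y) hP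
        (fun Y hY => (hRDP W S Y hY).2) X hX
    · intro W S hg Q hQ X hX
      exact RSP W S hg (fun Y => .recc W S Y) Q
        (fun Y hY => (hRDP W S Y hY).1) hQ X hX
  · rintro ⟨h1, h2⟩ W S hg P Q hP hQ X hX
    exact htrans _ _ _ (h1 W S hg P hP X hX) (h2 W S hg Q hQ X hX)
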